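/- Let $\{\lambda_i\} \in \ell_1$ and let $f_i = f(\mathbf{n}_i)$ for functions $\mathbf{n}_i \in \mathbf{D}$ (the special $\ell_2$-valued basic functions). Then $f = \sum_{i=1}^{\infty} \lambda_i f_i$ is Pettis integrable, and for every $\tau \in \{0,1\}^{<\infty}$, $\|\int_{I_\tau} f_{|\tau}\| \le \sum_{i=1}^{\infty} |\lambda_i| \, \|\int_{I_\tau} f_{i|\tau}\|$. -/

import Mathlib

open MeasureTheory
open scoped Classical

noncomputable section

/-- The Hilbert space `ℓ₂` of square-summable real sequences. -/
abbrev H2 : Type := lp (fun _ : ℕ => ℝ) 2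

/-- The index set `B = {(σ,i) : σ ∈ {0,1}^{<∞}, 0 ≤ i ≤ |σ|}`. -/
def Bidx : Type := Σ σ : List Bool, Fin (σ.length + 1)

/-- Left endpoint of the dyadic interval `I_σ`. -/
noncomputable def dyadicLeft (σ : List Bool) : ℝ :=
  ∑ i ∈ Finset.range σ.length, if σ.getD i false then (2:ℝ)⁻¹ ^ (i+1) else 0

/-- The dyadic interval `I_σ ⊆ [0,1]` of length `2^{-|σ|}`: `I_∅ = [0,1]`,
`I_{σ0}` is the left half and `I_{σ1}` the right half of `I_σ`. -/
noncomputable def dyadicInterval (σ : List Bool) : Set ℝ :=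
  Set.Icc (dyadicLeft σ) (dyadicLeft σ + (2:ℝ)⁻¹ ^ σ.length)

/-- `f` is Pettis integrable with respect to `μ`: every continuous functional composed with
`f` is integrable, and over each measurable set there is a vector representing the integrals. -/
def PettisIntegrable {X : Type} [NormedAddCommGroup X] [NormedSpace ℝ X]
    (f : ℝ → X) (μ : MeasureTheory.Measure ℝ) : Prop :=
  (∀ φ : X →L[ℝ] ℝ, MeasureTheory.Integrable (fun t => φ (f t)) μ) ∧
  ∀ E : Set ℝ, MeasurableSet E → ∃ v : X, ∀ φ : X →L[ℝ] ℝ, φ v = ∫ t in E, φ (f t) ∂μ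

/-- `v` is the Pettis integral of `f` over the set `E` (w.r.t. `μ`). -/
def IsPettisIntegralOn {X : Type} [NormedAddCommGroup X] [NormedSpace ℝ X]
    (f : ℝ → X) (μ : MeasureTheory.Measure ℝ) (E : Set ℝ) (v : X) : Prop :=
  ∀ φ : X →L[ℝ] ℝ, φ v = ∫ t in E, φ (f t) ∂μ

/-- The basic function `f = ∑_{(σ,i) ∈ B} c(σ,i) (1/λ(A(σ,i))) e(σ,i) χ_{A(σ,i)}`. -/
noncomputable def basicFun {X : Type} [NormedAddCommGroup X] [NormedSpace ℝ X]
    (c : Bidx → ℝ) (A : Bidx → Set ℝ) (e : Bidx → X) : ℝ → X :=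
  fun t => ∑' p : Bidx,
    Set.indicator (A p) (fun _ => ((MeasureTheory.volume (A p)).toReal)⁻¹ • (c p • e p)) t

/-- The restriction `f_{|τ}`: the subseries of the basic function over indices `(σ,i)`
with `σ` an extension of `τ`. -/
noncomputable def basicFunRes {X : Type} [NormedAddCommGroup X] [NormedSpace ℝ X]
    (τ : List Bool) (c : Bidx → ℝ) (A : Bidx → Set ℝ) (e : Bidx → X) : ℝ → X :=
  basicFun (fun p => if τ <+: p.1 then c p else 0) A e

/-- Coefficients of the special basic function `f(𝐧)`: the coefficient of `(σ, i)` is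
`1/((k+1)2^{k/2})` when `|σ| = k` and `i = 𝐧(k)`, and `0` otherwise. -/
noncomputable def specialCoef (n : ℕ → ℕ) : Bidx → ℝ := fun p =>
  if (p.2 : ℕ) = n p.1.length then
    (((p.1.length : ℝ) + 1) * (2:ℝ) ^ ((p.1.length : ℝ) / 2))⁻¹
  else 0

open Function Real

/-!
On the piece `A(σ,i)` the function `f(𝐧)_{|τ}` is the constant `c(σ,i) |A(σ,i)|⁻¹ e(σ,i)`, and
its coefficients are square summable: level `k` carries `2^k` nonzero coefficients, each of square
`2^{-k}/(k+1)²`, so their squares sum to at most `∑ 1/(k+1)² = π²/6`. For every functional `φ`,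
Bessel's inequality and Cauchy–Schwarz therefore bound `∫ |φ ∘ f(𝐧)_{|τ}|` by `(π/√6) ‖φ‖`,
uniformly in `𝐧` and `τ`, and the Pettis integral over `E` is
`∑ |A(σ,i) ∩ E| / |A(σ,i)| · c(σ,i) e(σ,i)`, of norm at most `π/√6`. Dominated convergence for the
scalar series `∑ λᵢ φ ∘ fᵢ` then shows that `∑ λᵢ fᵢ` is Pettis integrable, with integral the
norm-convergent series `∑ λᵢ ∫ fᵢ`; the inequality is the triangle inequality for that series.
-/

section Series

variable {α E : Type*} [MeasurableSpace α] {μ : Measure α} [NormedAddCommGroup E]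

theorem aestronglyMeasurable_tsum {ι : Type*} [Countable ι] {f : ι → α → E}
    (hf : ∀ i, AEStronglyMeasurable (f i) μ) (hs : ∀ x, Summable fun i => f i x) :
    AEStronglyMeasurable (fun x => ∑' i, f i x) μ :=
  aestronglyMeasurable_of_tendsto_ae Filter.atTop
    (fun s => Finset.aestronglyMeasurable_fun_sum s fun i _ => hf i)
    (Filter.Eventually.of_forall fun x => (hs x).hasSum)

theorem integrable_tsum_of_summable_integral_norm {ι : Type*} [Countable ι] {f : ι → α → E}
    (hf : ∀ i, Integrable (f i) μ) (hs : ∀ x, Summable fun i => f i x)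
    (hsum : Summable fun i => ∫ x, ‖f i x‖ ∂μ) :
    Integrable (fun x => ∑' i, f i x) μ := by
  refine ⟨aestronglyMeasurable_tsum (fun i => (hf i).1) hs, ?_⟩
  calc ∫⁻ x, ‖∑' i, f i x‖ₑ ∂μ ≤ ∫⁻ x, ∑' i, ‖f i x‖ₑ ∂μ :=
        lintegral_mono fun x => enorm_tsum_le_tsum_enorm
    _ = ∑' i, ENNReal.ofReal (∫ x, ‖f i x‖ ∂μ) := by
        rw [lintegral_tsum fun i => (hf i).1.enorm]
        simp only [ofReal_integral_norm_eq_lintegral_enorm (hf _)]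
    _ < ⊤ := by
        rw [← ENNReal.ofReal_tsum_of_nonneg (fun i => integral_nonneg fun x => norm_nonneg _) hsum]
        exact ENNReal.ofReal_lt_top

theorem integrable_and_integral_tsum_mul {lam : ℕ → ℝ} (hlam : Summable fun i => |lam i|)
    {h : ℕ → α → ℝ} {K : ℝ}
    (hint : ∀ i, Integrable (h i) μ) (hK : ∀ i, ∫ x, ‖h i x‖ ∂μ ≤ K)
    (hs : ∀ x, Summable fun i => lam i * h i x) :
    Integrable (fun x => ∑' i, lam i * h i x) μ ∧
      ∫ x, ∑' i, lam i * h i x ∂μ = ∑' i, lam i * ∫ x, h i x ∂μ := by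
  have hint' : ∀ i, Integrable (fun x => lam i * h i x) μ := fun i => (hint i).const_mul _
  have hsum : Summable fun i => ∫ x, ‖lam i * h i x‖ ∂μ := by
    refine Summable.of_nonneg_of_le (fun i => integral_nonneg fun x => norm_nonneg _)
      (fun i => ?_) (hlam.mul_right K)
    simp only [norm_mul, integral_const_mul, Real.norm_eq_abs]
    exact mul_le_mul_of_nonneg_left (hK i) (abs_nonneg _)
  refine ⟨integrable_tsum_of_summable_integral_norm hint' hs hsum, ?_⟩
  rw [← integral_tsum_of_summable_integral_norm hint' hsum]
  simp only [integral_const_mul]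

end Series

section Pettis

variable {X : Type} [NormedAddCommGroup X] [NormedSpace ℝ X] {f : ℝ → X} {μ : Measure ℝ}
  {E : Set ℝ} {v w : X}

theorem IsPettisIntegralOn.unique (hv : IsPettisIntegralOn f μ E v)
    (hw : IsPettisIntegralOn f μ E w) : v = w :=
  (SeparatingDual.eq_iff_forall_dual_eq (R := ℝ)).2 fun φ => (hv φ).trans (hw φ).symm

theorem IsPettisIntegralOn.norm_le {C : ℝ} (hC : 0 ≤ C)
    (hf : ∀ φ : X →L[ℝ] ℝ, ∫ t in E, ‖φ (f t)‖ ∂μ ≤ C * ‖φ‖) (hv : IsPettisIntegralOn f μ E v) :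
    ‖v‖ ≤ C :=
  NormedSpace.norm_le_dual_bound ℝ v hC fun φ => by
    rw [hv φ]
    exact (norm_integral_le_integral_norm _).trans (hf φ)

end Pettis

section Combination

variable {X : Type} [NormedAddCommGroup X] [NormedSpace ℝ X] {μ : Measure ℝ} {E : Set ℝ}
  {lam : ℕ → ℝ} {g : ℕ → ℝ → X} {C : ℝ}

theorem integrable_and_integral_comp_tsum_smul (hlam : Summable fun i => |lam i|)
    (hint : ∀ i (φ : X →L[ℝ] ℝ), Integrable (fun t => φ (g i t)) (μ.restrict E))
    (hbound : ∀ i (φ : X →L[ℝ] ℝ), ∫ t in E, ‖φ (g i t)‖ ∂μ ≤ C * ‖φ‖)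
    (hs : ∀ t, Summable fun i => lam i • g i t) (φ : X →L[ℝ] ℝ) :
    Integrable (fun t => φ (∑' i, lam i • g i t)) (μ.restrict E) ∧
      ∫ t in E, φ (∑' i, lam i • g i t) ∂μ = ∑' i, lam i * ∫ t in E, φ (g i t) ∂μ := by
  have hφ : ∀ t, φ (∑' i, lam i • g i t) = ∑' i, lam i * φ (g i t) := fun t => by
    simp only [φ.map_tsum (hs t), map_smul, smul_eq_mul]
  simp only [hφ]
  exact integrable_and_integral_tsum_mul hlam (fun i => hint i φ) (fun i => hbound i φ)
    fun t => by simpa only [map_smul, smul_eq_mul] using φ.summable (hs t)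

theorem isPettisIntegralOn_tsum_smul [CompleteSpace X] (hlam : Summable fun i => |lam i|)
    (hC : 0 ≤ C) (hint : ∀ i (φ : X →L[ℝ] ℝ), Integrable (fun t => φ (g i t)) (μ.restrict E))
    (hbound : ∀ i (φ : X →L[ℝ] ℝ), ∫ t in E, ‖φ (g i t)‖ ∂μ ≤ C * ‖φ‖)
    (hs : ∀ t, Summable fun i => lam i • g i t) {w : ℕ → X}
    (hw : ∀ i, IsPettisIntegralOn (g i) μ E (w i)) :
    IsPettisIntegralOn (fun t => ∑' i, lam i • g i t) μ E (∑' i, lam i • w i) := by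
  intro φ
  have hsw : Summable fun i => lam i • w i := by
    refine Summable.of_norm_bounded (hlam.mul_right C) fun i => ?_
    rw [norm_smul, Real.norm_eq_abs]
    exact mul_le_mul_of_nonneg_left ((hw i).norm_le hC (hbound i)) (abs_nonneg _)
  rw [(integrable_and_integral_comp_tsum_smul hlam hint hbound hs φ).2, φ.map_tsum hsw]
  simp only [map_smul, smul_eq_mul, hw _ φ]

end Combination

instance : Countable Bidx := inferInstanceAs (Countable (Σ σ : List Bool, Fin (σ.length + 1)))

section BasicFun

variable {X : Type} [NormedAddCommGroup X] [NormedSpace ℝ X] {A : Bidx → Set ℝ} {c : Bidx → ℝ}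
  {e : Bidx → X} {t : ℝ}

theorem basicFun_apply_of_mem (hA : Pairwise (Disjoint on A)) {p : Bidx} (ht : t ∈ A p) :
    basicFun c A e t = (volume (A p)).toReal⁻¹ • c p • e p := by
  rw [basicFun, tsum_eq_single p fun q hq => Set.indicator_of_notMem
    (fun htq => Set.disjoint_left.1 (hA hq) htq ht) _, Set.indicator_of_mem ht]

theorem basicFun_apply_of_forall_notMem (ht : ∀ p, t ∉ A p) : basicFun c A e t = 0 := by
  simp [basicFun, Set.indicator_of_notMem (ht _)]

theorem map_basicFun {Y : Type} [NormedAddCommGroup Y] [NormedSpace ℝ Y]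
    (hA : Pairwise (Disjoint on A)) (φ : X →L[ℝ] Y) :
    φ (basicFun c A e t) = basicFun c A (fun p => φ (e p)) t := by
  by_cases ht : ∃ p, t ∈ A p
  · obtain ⟨p, hp⟩ := ht
    simp only [basicFun_apply_of_mem hA hp, map_smul]
  · push Not at ht
    simp only [basicFun_apply_of_forall_notMem ht, map_zero]

theorem norm_basicFun (hA : Pairwise (Disjoint on A)) :
    ‖basicFun c A e t‖ = basicFun (fun p => |c p|) A (fun p => ‖e p‖) t := by
  by_cases ht : ∃ p, t ∈ A p
  · obtain ⟨p, hp⟩ := ht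
    simp only [basicFun_apply_of_mem hA hp, norm_smul, smul_eq_mul, Real.norm_eq_abs,
      abs_inv, ENNReal.abs_toReal]
  · push Not at ht
    simp only [basicFun_apply_of_forall_notMem ht, norm_zero]

theorem summable_smul_basicFun (hA : Pairwise (Disjoint on A)) {lam : ℕ → ℝ} {c : ℕ → Bidx → ℝ}
    (hc : ∀ p, Summable fun i => lam i * c i p) (t : ℝ) :
    Summable fun i => lam i • basicFun (c i) A e t := by
  by_cases ht : ∃ p, t ∈ A p
  · obtain ⟨p, hp⟩ := ht
    refine ((hc p).smul_const ((volume (A p)).toReal⁻¹ • e p)).congr fun i => ?_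
    rw [basicFun_apply_of_mem hA hp]
    module
  · push Not at ht
    simp only [basicFun_apply_of_forall_notMem ht, smul_zero, summable_zero]

end BasicFun

-- For `volume s = ∞` the factor `(volume s).toReal⁻¹` is `0⁻¹ = 0`.
theorem measureReal_mul_inv_volume_le_one {ν : Measure ℝ} [IsFiniteMeasure ν] (hν : ν ≤ volume)
    (s : Set ℝ) : ν.real s * (volume s).toReal⁻¹ ≤ 1 := by
  by_cases hs : volume s = ⊤
  · simp [hs]
  · rw [← div_eq_mul_inv]
    exact div_le_one_of_le₀ (ENNReal.toReal_mono hs (hν s)) ENNReal.toReal_nonneg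

section IntegralBasicFun

variable {X : Type} [NormedAddCommGroup X] [NormedSpace ℝ X] {A : Bidx → Set ℝ} {c : Bidx → ℝ}
  {e : Bidx → X} {ν : Measure ℝ} [IsFiniteMeasure ν]

theorem integrable_and_integral_basicFun [CompleteSpace X] (hAm : ∀ p, MeasurableSet (A p))
    (hA : Pairwise (Disjoint on A)) (hν : ν ≤ volume) (hs : Summable fun p => ‖c p • e p‖) :
    Integrable (basicFun c A e) ν ∧
      ∫ t, basicFun c A e t ∂ν = ∑' p, (ν.real (A p) * (volume (A p)).toReal⁻¹) • c p • e p := by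
  set F : Bidx → ℝ → X := fun p => (A p).indicator fun _ => (volume (A p)).toReal⁻¹ • c p • e p
  have hF : ∀ p, Integrable (F p) ν := fun p => (integrable_const _).indicator (hAm p)
  have hFs : ∀ t, Summable fun p => F p t := fun t =>
    summable_of_hasFiniteSupport <|
      ((subsingleton_setOfPred_mem_iff_pairwise_disjoint.2 hA) t).finite.subset fun p hp =>
        by_contra fun ht => hp (Set.indicator_of_notMem (s := A p) ht _)
  have hFn : Summable fun p => ∫ t, ‖F p t‖ ∂ν := by
    refine Summable.of_nonneg_of_le (fun p => integral_nonneg fun t => norm_nonneg _)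
      (fun p => ?_) hs
    calc ∫ t, ‖F p t‖ ∂ν = ν.real (A p) * (volume (A p)).toReal⁻¹ * ‖c p • e p‖ := by
          simp only [F, norm_indicator_eq_indicator_norm, integral_indicator_const _ (hAm p),
            smul_eq_mul, norm_smul_of_nonneg (inv_nonneg.2 ENNReal.toReal_nonneg), mul_assoc]
      _ ≤ ‖c p • e p‖ :=
          mul_le_of_le_one_left (norm_nonneg _) (measureReal_mul_inv_volume_le_one hν _)
  refine ⟨integrable_tsum_of_summable_integral_norm hF hFs hFn, ?_⟩
  change ∫ t, ∑' p, F p t ∂ν = _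
  rw [← integral_tsum_of_summable_integral_norm hF hFn]
  simp only [F, integral_indicator_const _ (hAm _), smul_smul, mul_assoc]

end IntegralBasicFun

section Hilbert

variable {H : Type} [NormedAddCommGroup H] [InnerProductSpace ℝ H] [CompleteSpace H]
  {A : Bidx → Set ℝ} {c : Bidx → ℝ} {e : Bidx → H}

theorem Orthonormal.summable_and_tsum_abs_mul_le {ι : Type*} {e : ι → H} (he : Orthonormal ℝ e)
    {c : ι → ℝ} (hc : Summable fun i => c i ^ 2) (φ : H →L[ℝ] ℝ) :
    Summable (fun i => |c i| * |φ (e i)|) ∧ ∑' i, |c i| * |φ (e i)| ≤ √(∑' i, c i ^ 2) * ‖φ‖ := by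
  set y := (InnerProductSpace.toDual ℝ H).symm φ
  have hy : ∀ i, ‖inner ℝ (e i) y‖ = |φ (e i)| := fun i => by
    rw [real_inner_comm, InnerProductSpace.toDual_symm_apply, Real.norm_eq_abs]
  have hbessel : ∑' i, φ (e i) ^ 2 ≤ ‖φ‖ ^ 2 := by
    simpa only [hy, sq_abs, y, LinearIsometryEquiv.norm_map] using he.tsum_inner_products_le y
  have hsq : ∀ x : ℝ, |x| ^ (2 : ℝ) = x ^ 2 := fun x => by rw [Real.rpow_two, sq_abs]
  have hc' : Summable fun i => |c i| ^ (2 : ℝ) := by simpa only [hsq] using hc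
  have hφ : Summable fun i => |φ (e i)| ^ (2 : ℝ) := by
    simpa only [hsq, sq_abs, hy] using he.inner_products_summable y
  refine ⟨Real.summable_mul_of_Lp_Lq_of_nonneg .two_two (fun i => abs_nonneg _)
    (fun i => abs_nonneg _) hc' hφ, ?_⟩
  refine (Real.inner_le_Lp_mul_Lq_tsum_of_nonneg .two_two (fun i => abs_nonneg _)
    (fun i => abs_nonneg _) hc' hφ).trans ?_
  simp only [hsq, ← Real.sqrt_eq_rpow]
  exact mul_le_mul_of_nonneg_left
    ((Real.sqrt_le_sqrt hbessel).trans_eq (Real.sqrt_sq (norm_nonneg φ))) (Real.sqrt_nonneg _)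

theorem Orthonormal.summable_smul {ι : Type*} {e : ι → H} (he : Orthonormal ℝ e) {a : ι → ℝ}
    (ha : Summable fun i => a i ^ 2) : Summable fun i => a i • e i :=
  ((he.orthogonalFamily.summable_iff_norm_sq_summable a).2
    (by simpa only [Real.norm_eq_abs, sq_abs] using ha)).congr
    fun i => LinearIsometry.toSpanSingleton_apply (he.1 i) (a i)

theorem integrable_and_integral_norm_comp_basicFun_le {ν : Measure ℝ} [IsFiniteMeasure ν]
    (hAm : ∀ p, MeasurableSet (A p)) (hA : Pairwise (Disjoint on A)) (hν : ν ≤ volume)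
    (he : Orthonormal ℝ e) (hc : Summable fun p => c p ^ 2) (φ : H →L[ℝ] ℝ) :
    Integrable (fun t => φ (basicFun c A e t)) ν ∧
      ∫ t, ‖φ (basicFun c A e t)‖ ∂ν ≤ √(∑' p, c p ^ 2) * ‖φ‖ := by
  obtain ⟨hs, hle⟩ := he.summable_and_tsum_abs_mul_le hc φ
  have hs' : Summable fun p => ‖c p • φ (e p)‖ := by
    simpa only [norm_smul, Real.norm_eq_abs] using hs
  have hs'' : Summable fun p => ‖|c p| • ‖φ (e p)‖‖ := by
    simpa only [norm_smul, Real.norm_eq_abs, abs_abs, abs_norm] using hs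
  simp only [map_basicFun hA φ, norm_basicFun hA]
  refine ⟨(integrable_and_integral_basicFun hAm hA hν hs').1, ?_⟩
  rw [(integrable_and_integral_basicFun hAm hA hν hs'').2]
  have hterm : ∀ p, (ν.real (A p) * (volume (A p)).toReal⁻¹) • |c p| • ‖φ (e p)‖
      ≤ |c p| * |φ (e p)| := fun p => by
    rw [smul_eq_mul, smul_eq_mul, Real.norm_eq_abs]
    exact mul_le_of_le_one_left (by positivity) (measureReal_mul_inv_volume_le_one hν _)
  have hnonneg : ∀ p, 0 ≤ (ν.real (A p) * (volume (A p)).toReal⁻¹) • |c p| • ‖φ (e p)‖ :=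
    fun p => by simp only [smul_eq_mul]; positivity
  exact (Summable.tsum_le_tsum hterm (hs.of_nonneg_of_le hnonneg hterm) hs).trans hle

theorem isPettisIntegralOn_basicFun {μ : Measure ℝ} [IsFiniteMeasure μ]
    (hAm : ∀ p, MeasurableSet (A p)) (hA : Pairwise (Disjoint on A)) (hμ : μ ≤ volume)
    (he : Orthonormal ℝ e) (hc : Summable fun p => c p ^ 2) (E : Set ℝ) :
    IsPettisIntegralOn (basicFun c A e) μ E
      (∑' p, ((μ.restrict E).real (A p) * (volume (A p)).toReal⁻¹ * c p) • e p) := by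
  intro φ
  have hν : μ.restrict E ≤ volume := Measure.restrict_le_self.trans hμ
  have ha : Summable fun p => ((μ.restrict E).real (A p) * (volume (A p)).toReal⁻¹ * c p) ^ 2 :=
    hc.of_nonneg_of_le (fun p => sq_nonneg _) fun p => by
      rw [mul_pow]
      exact mul_le_of_le_one_left (sq_nonneg _)
        (pow_le_one₀ (by positivity) (measureReal_mul_inv_volume_le_one hν _))
  obtain ⟨hs, -⟩ := he.summable_and_tsum_abs_mul_le hc φ
  have hs' : Summable fun p => ‖c p • φ (e p)‖ := by
    simpa only [norm_smul, Real.norm_eq_abs] using hs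
  simp only [φ.map_tsum (he.summable_smul ha), map_basicFun hA φ,
    (integrable_and_integral_basicFun hAm hA hν hs').2, map_smul, smul_smul]

end Hilbert

section SpecialCoef

theorem hasSum_inv_succ_sq : HasSum (fun k : ℕ => (((k : ℝ) + 1) ^ 2)⁻¹) (π ^ 2 / 6) := by
  simpa using (hasSum_nat_add_iff' 1).2 hasSum_zeta_two

theorem hasSum_inv_two_pow_length_mul {f : ℕ → ℝ} {a : ℝ} (hf : HasSum f a) (h0 : ∀ k, 0 ≤ f k) :
    HasSum (fun σ : List Bool => ((2 : ℝ) ^ σ.length)⁻¹ * f σ.length) a := by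
  rw [← List.equivSigmaTuple.symm.hasSum_iff]
  have hfiber : ∀ k, HasSum (fun v : Fin k → Bool => ((2 : ℝ) ^ k)⁻¹ * f k) (f k) := fun k => by
    convert hasSum_fintype fun _ : Fin k → Bool => ((2 : ℝ) ^ k)⁻¹ * f k
    simp
  have hs : Summable fun v : (Σ k, Fin k → Bool) => ((2 : ℝ) ^ v.1)⁻¹ * f v.1 :=
    (summable_sigma_of_nonneg fun v => by positivity [h0 v.1]).2
      ⟨fun k => (hfiber k).summable, by simpa only [(hfiber _).tsum_eq] using hf.summable⟩
  have hcomp : (fun σ : List Bool => ((2 : ℝ) ^ σ.length)⁻¹ * f σ.length) ∘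
      List.equivSigmaTuple.symm = fun v => ((2 : ℝ) ^ v.1)⁻¹ * f v.1 :=
    funext fun v => by simp [List.equivSigmaTuple]
  rw [hcomp]
  exact hf.sigma_of_hasSum hfiber hs

theorem specialCoef_mk (n : ℕ → ℕ) (σ : List Bool) (j : Fin (σ.length + 1)) :
    specialCoef n ⟨σ, j⟩ = if (j : ℕ) = n σ.length then
      (((σ.length : ℝ) + 1) * (2 : ℝ) ^ ((σ.length : ℝ) / 2))⁻¹ else 0 := rfl

theorem inv_mul_two_rpow_half_sq (k : ℕ) :
    ((((k : ℝ) + 1) * (2 : ℝ) ^ ((k : ℝ) / 2))⁻¹) ^ 2 =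
      ((2 : ℝ) ^ k)⁻¹ * (((k : ℝ) + 1) ^ 2)⁻¹ := by
  rw [inv_pow, mul_pow, ← Real.rpow_mul_natCast zero_le_two, Nat.cast_ofNat,
    div_mul_cancel₀ _ two_ne_zero, Real.rpow_natCast, mul_inv, mul_comm]

theorem sum_sq_specialCoef_le (n : ℕ → ℕ) (σ : List Bool) :
    ∑ j : Fin (σ.length + 1), specialCoef n ⟨σ, j⟩ ^ 2 ≤
      ((2 : ℝ) ^ σ.length)⁻¹ * (((σ.length : ℝ) + 1) ^ 2)⁻¹ := by
  calc ∑ j : Fin (σ.length + 1), specialCoef n ⟨σ, j⟩ ^ 2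
      = ∑ j ∈ Finset.range (σ.length + 1), if j = n σ.length then
          ((2 : ℝ) ^ σ.length)⁻¹ * (((σ.length : ℝ) + 1) ^ 2)⁻¹ else 0 := by
        rw [← Fin.sum_univ_eq_sum_range (fun j => if j = n σ.length then _ else 0)]
        refine Finset.sum_congr rfl fun j _ => ?_
        rw [specialCoef_mk]
        split_ifs
        · exact inv_mul_two_rpow_half_sq _
        · exact zero_pow two_ne_zero
    _ ≤ ((2 : ℝ) ^ σ.length)⁻¹ * (((σ.length : ℝ) + 1) ^ 2)⁻¹ := by
        rw [Finset.sum_ite_eq']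
        split_ifs
        · exact le_rfl
        · positivity

theorem summable_and_tsum_sq_specialCoef_le (n : ℕ → ℕ) :
    Summable (fun p => specialCoef n p ^ 2) ∧
      ∑' p, specialCoef n p ^ 2 ≤ π ^ 2 / 6 := by
  have hL := hasSum_inv_two_pow_length_mul hasSum_inv_succ_sq fun k => by positivity
  have hfiber : ∀ σ, Summable fun j : Fin (σ.length + 1) => specialCoef n ⟨σ, j⟩ ^ 2 :=
    fun σ => (hasSum_fintype _).summable
  have hle : ∀ σ : List Bool, ∑' j : Fin (σ.length + 1), specialCoef n ⟨σ, j⟩ ^ 2 ≤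
      ((2 : ℝ) ^ σ.length)⁻¹ * (((σ.length : ℝ) + 1) ^ 2)⁻¹ := fun σ => by
    rw [tsum_fintype]
    exact sum_sq_specialCoef_le n σ
  have hs : Summable fun p : (Σ σ : List Bool, Fin (σ.length + 1)) => specialCoef n p ^ 2 :=
    (summable_sigma_of_nonneg fun p => sq_nonneg _).2
      ⟨hfiber, hL.summable.of_nonneg_of_le (fun σ => tsum_nonneg fun j => sq_nonneg _) hle⟩
  refine ⟨hs, ?_⟩
  calc ∑' p : Bidx, specialCoef n p ^ 2
      = ∑' (σ : List Bool) (j : Fin (σ.length + 1)), specialCoef n ⟨σ, j⟩ ^ 2 :=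
        hs.tsum_sigma' hfiber
    _ ≤ ∑' σ : List Bool, ((2 : ℝ) ^ σ.length)⁻¹ * (((σ.length : ℝ) + 1) ^ 2)⁻¹ :=
        Summable.tsum_le_tsum hle
          (hL.summable.of_nonneg_of_le (fun σ => tsum_nonneg fun j => sq_nonneg _) hle) hL.summable
    _ = π ^ 2 / 6 := hL.tsum_eq

end SpecialCoef

section SpecialBasicFun

def resCoef (τ : List Bool) (c : Bidx → ℝ) : Bidx → ℝ := fun p => if τ <+: p.1 then c p else 0

theorem basicFunRes_eq {X : Type} [NormedAddCommGroup X] [NormedSpace ℝ X] (τ : List Bool)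
    (c : Bidx → ℝ) (A : Bidx → Set ℝ) (e : Bidx → X) :
    basicFunRes τ c A e = basicFun (resCoef τ c) A e := rfl

theorem specialCoef_nonneg (n : ℕ → ℕ) (p : Bidx) : 0 ≤ specialCoef n p := by
  unfold specialCoef
  split_ifs <;> positivity

theorem specialCoef_le_one (n : ℕ → ℕ) (p : Bidx) : specialCoef n p ≤ 1 := by
  unfold specialCoef
  split_ifs
  · exact inv_le_one_of_one_le₀ (one_le_mul_of_one_le_of_one_le (by simp)
      (one_le_rpow one_le_two (by positivity)))
  · exact zero_le_one

theorem abs_resCoef_specialCoef_le (τ : List Bool) (n : ℕ → ℕ) (p : Bidx) :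
    |resCoef τ (specialCoef n) p| ≤ specialCoef n p := by
  unfold resCoef
  split_ifs
  · exact (abs_of_nonneg (specialCoef_nonneg n p)).le
  · simpa using specialCoef_nonneg n p

theorem summable_and_tsum_sq_resCoef_specialCoef_le (τ : List Bool) (n : ℕ → ℕ) :
    Summable (fun p => resCoef τ (specialCoef n) p ^ 2) ∧
      ∑' p, resCoef τ (specialCoef n) p ^ 2 ≤ π ^ 2 / 6 := by
  obtain ⟨hs, hle⟩ := summable_and_tsum_sq_specialCoef_le n
  have h : ∀ p, resCoef τ (specialCoef n) p ^ 2 ≤ specialCoef n p ^ 2 := fun p => by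
    rw [← sq_abs]
    exact pow_le_pow_left₀ (abs_nonneg _) (abs_resCoef_specialCoef_le τ n p) 2
  have hs' := hs.of_nonneg_of_le (fun p => sq_nonneg _) h
  exact ⟨hs', (Summable.tsum_le_tsum h hs' hs).trans hle⟩

theorem basicFunRes_nil {X : Type} [NormedAddCommGroup X] [NormedSpace ℝ X] (c : Bidx → ℝ)
    (A : Bidx → Set ℝ) (e : Bidx → X) : basicFunRes [] c A e = basicFun c A e := by
  simp [basicFunRes]

theorem summable_smul_basicFunRes {X : Type} [NormedAddCommGroup X] [NormedSpace ℝ X]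
    {A : Bidx → Set ℝ} {e : Bidx → X} (hA : Pairwise (Disjoint on A)) {lam : ℕ → ℝ}
    (hlam : Summable fun i => |lam i|) (τ : List Bool) (nf : ℕ → ℕ → ℕ) (t : ℝ) :
    Summable fun i => lam i • basicFunRes τ (specialCoef (nf i)) A e t := by
  simp only [basicFunRes_eq]
  refine summable_smul_basicFun hA (fun p => Summable.of_norm_bounded hlam fun i => ?_) t
  rw [norm_mul, Real.norm_eq_abs, Real.norm_eq_abs]
  exact mul_le_of_le_one_right (abs_nonneg _)
    ((abs_resCoef_specialCoef_le τ (nf i) p).trans (specialCoef_le_one (nf i) p))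

variable {H : Type} [NormedAddCommGroup H] [InnerProductSpace ℝ H] [CompleteSpace H]
  {A : Bidx → Set ℝ} {e : Bidx → H}

theorem integrable_and_integral_norm_comp_basicFunRes_le {ν : Measure ℝ} [IsFiniteMeasure ν]
    (hAm : ∀ p, MeasurableSet (A p)) (hA : Pairwise (Disjoint on A)) (hν : ν ≤ volume)
    (he : Orthonormal ℝ e) (τ : List Bool) (n : ℕ → ℕ) (φ : H →L[ℝ] ℝ) :
    Integrable (fun t => φ (basicFunRes τ (specialCoef n) A e t)) ν ∧
      ∫ t, ‖φ (basicFunRes τ (specialCoef n) A e t)‖ ∂ν ≤ √(π ^ 2 / 6) * ‖φ‖ := by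
  simp only [basicFunRes_eq]
  obtain ⟨hs, hle⟩ := summable_and_tsum_sq_resCoef_specialCoef_le τ n
  obtain ⟨hint, hnorm⟩ := integrable_and_integral_norm_comp_basicFun_le hAm hA hν he hs φ
  exact ⟨hint, hnorm.trans (mul_le_mul_of_nonneg_right (sqrt_le_sqrt hle) (norm_nonneg φ))⟩

theorem exists_isPettisIntegralOn_basicFunRes {μ : Measure ℝ} [IsFiniteMeasure μ]
    (hAm : ∀ p, MeasurableSet (A p)) (hA : Pairwise (Disjoint on A)) (hμ : μ ≤ volume)
    (he : Orthonormal ℝ e) (τ : List Bool) (n : ℕ → ℕ) (E : Set ℝ) :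
    ∃ v, IsPettisIntegralOn (basicFunRes τ (specialCoef n) A e) μ E v := by
  rw [basicFunRes_eq]
  exact ⟨_, isPettisIntegralOn_basicFun hAm hA hμ he
    (summable_and_tsum_sq_resCoef_specialCoef_le τ n).1 E⟩

end SpecialBasicFun

theorem stmt9_general (A : Bidx → Set ℝ) (hAc : ∀ p, IsClosed (A p))
    (hdisj : ∀ p q : Bidx, p ≠ q → Disjoint (A p) (A q))
    (e : Bidx → H2) (he : Orthonormal ℝ e)
    (nf : ℕ → ℕ → ℕ)
    (lam : ℕ → ℝ) (hlam : Summable (fun i => |lam i|)) :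
    PettisIntegrable (fun t => ∑' i : ℕ, lam i • basicFun (specialCoef (nf i)) A e t)
      (volume.restrict (Set.Icc 0 1)) ∧
    ∀ (τ : List Bool) (v : H2) (w : ℕ → H2),
      IsPettisIntegralOn (fun t => ∑' i : ℕ, lam i • basicFunRes τ (specialCoef (nf i)) A e t)
        (volume.restrict (Set.Icc 0 1)) (dyadicInterval τ) v →
      (∀ i, IsPettisIntegralOn (basicFunRes τ (specialCoef (nf i)) A e)
        (volume.restrict (Set.Icc 0 1)) (dyadicInterval τ) (w i)) →
      ‖v‖ ≤ ∑' i : ℕ, |lam i| * ‖w i‖ := by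
  have hAm : ∀ p, MeasurableSet (A p) := fun p => (hAc p).measurableSet
  have hA : Pairwise (Disjoint on A) := fun p q => hdisj p q
  set μ := volume.restrict (Set.Icc (0 : ℝ) 1)
  have hμ : μ ≤ volume := Measure.restrict_le_self
  have hbound := fun τ E i => integrable_and_integral_norm_comp_basicFunRes_le hAm hA
    ((Measure.restrict_le_self (s := E)).trans hμ) he τ (nf i)
  have hpettis : ∀ τ E (w : ℕ → H2),
      (∀ i, IsPettisIntegralOn (basicFunRes τ (specialCoef (nf i)) A e) μ E (w i)) →
      IsPettisIntegralOn (fun t => ∑' i, lam i • basicFunRes τ (specialCoef (nf i)) A e t) μ E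
        (∑' i, lam i • w i) := fun τ E w hw =>
    isPettisIntegralOn_tsum_smul hlam (sqrt_nonneg _) (fun i φ => (hbound τ E i φ).1)
      (fun i φ => (hbound τ E i φ).2) (summable_smul_basicFunRes hA hlam τ nf) hw
  simp only [← basicFunRes_nil]
  refine ⟨⟨fun φ => ?_, fun E _ => ?_⟩, fun τ v w hv hw => ?_⟩
  · simpa only [Measure.restrict_univ] using (integrable_and_integral_comp_tsum_smul hlam
      (fun i φ => (hbound [] Set.univ i φ).1) (fun i φ => (hbound [] Set.univ i φ).2)
      (summable_smul_basicFunRes hA hlam [] nf) φ).1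
  · choose w hw using fun i => exists_isPettisIntegralOn_basicFunRes hAm hA hμ he [] (nf i) E
    exact ⟨_, hpettis [] E w hw⟩
  · have hw_le : ∀ i, ‖lam i • w i‖ ≤ |lam i| * √(π ^ 2 / 6) := fun i => by
      rw [norm_smul, Real.norm_eq_abs]
      exact mul_le_mul_of_nonneg_left
        ((hw i).norm_le (sqrt_nonneg _) fun φ => (hbound τ _ i φ).2) (abs_nonneg _)
    rw [hv.unique (hpettis τ _ w hw)]
    refine (norm_tsum_le_tsum_norm ((hlam.mul_right _).of_nonneg_of_le (fun i => norm_nonneg _)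
      hw_le)).trans_eq (tsum_congr fun i => ?_)
    rw [norm_smul, Real.norm_eq_abs]

/-- Lemma 3.3: for `{λᵢ} ∈ ℓ₁` and special basic functions `fᵢ = f(𝐧ᵢ)`, the function
`f = ∑ᵢ λᵢ fᵢ` is Pettis integrable, and for each `τ`,
`‖∫_{I_τ} f_{|τ}‖ ≤ ∑ᵢ |λᵢ| ‖∫_{I_τ} f_{i|τ}‖`. -/
theorem stmt9 (A : Bidx → Set ℝ) (hAc : ∀ p, IsClosed (A p))
    (hAs : ∀ p : Bidx, A p ⊆ dyadicInterval p.1)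
    (hApos : ∀ p, 0 < volume (A p))
    (hdisj : ∀ p q : Bidx, p ≠ q → Disjoint (A p) (A q))
    (e : Bidx → H2) (he : Orthonormal ℝ e)
    (nf : ℕ → ℕ → ℕ) (hnf : ∀ i k, nf i k ≤ k)
    (lam : ℕ → ℝ) (hlam : Summable (fun i => |lam i|)) :
    PettisIntegrable (fun t => ∑' i : ℕ, lam i • basicFun (specialCoef (nf i)) A e t)
      (volume.restrict (Set.Icc 0 1)) ∧
    ∀ (τ : List Bool) (v : H2) (w : ℕ → H2),
      IsPettisIntegralOn (fun t => ∑' i : ℕ, lam i • basicFunRes τ (specialCoef (nf i)) A e t)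
        (volume.restrict (Set.Icc 0 1)) (dyadicInterval τ) v →
      (∀ i, IsPettisIntegralOn (basicFunRes τ (specialCoef (nf i)) A e)
        (volume.restrict (Set.Icc 0 1)) (dyadicInterval τ) (w i)) →
      ‖v‖ ≤ ∑' i : ℕ, |lam i| * ‖w i‖ :=
  stmt9_general A hAc hdisj e he nf lam hlam
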